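/- arXiv:1603.09705 — 7 statements merged into one kernel-verified Lean document; each statement's English description precedes it below -/
import Mathlib

section
/- Let V1, V2, W be finite-dimensional complex vector spaces with V1 and V2 nonzero, and let b : V1 -> V2 -> W be a bilinear map such that b(v, w) is nonzero whenever v is nonzero and w is nonzero. Then dim W >= dim V1 + dim V2 - 1. -/
/-!
In coordinates, the components of `b` are `m = dim W` bilinear forms `f_l(x, y)` in
`n₁ + n₂` variables, and nonsingularity of `b` says that their common zeros satisfy `x = 0` or
`y = 0`. The forms lie in the ring `A` of balanced polynomials (equal degree in `x` and in `y`),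
the homogeneous coordinate ring of the Segre embedding of `ℙ^{n₁-1} × ℙ^{n₂-1}`. By the
Nullstellensatz the irrelevant ideal `𝔪` of `A` is the radical of `(f_1, …, f_m)`, so Krull's
height theorem gives `ht 𝔪 ≤ m`. On the other hand, killing the variables one at a time, keeping
one `x`- and one `y`-variable alive until the last step, produces a strictly increasing chain of
primes of `A` of length `n₁ + n₂ - 1` ending at `𝔪`. Krull's theorem applies because the
projection of `ℂ[x, y]` onto its balanced part is an `A`-linear retraction onto `A`, so `A` is
Noetherian and its ideals are contracted from `ℂ[x, y]`.
-/

open MvPolynomial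

theorem MvPolynomial.IsWeightedHomogeneous.weightedHomogeneousComponent_mul_of_zero
    {R σ M : Type*} [CommSemiring R] [AddCommMonoid M] [DecidableEq M] {w : σ → M}
    {φ : MvPolynomial σ R} (hφ : φ.IsWeightedHomogeneous w 0) (ψ : MvPolynomial σ R) (m : M) :
    weightedHomogeneousComponent w m (φ * ψ) = φ * weightedHomogeneousComponent w m ψ := by
  let _ := weightedGradedAlgebra R w
  have := DirectSum.coe_decompose_mul_of_left_mem_zero (weightedHomogeneousSubmodule R w)
    (j := m) (b := ψ) hφ
  rwa [DirectSum.decompose, Equiv.coe_fn_mk, weightedDecomposition.decompose'_apply,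
    weightedDecomposition.decompose'_apply] at this

namespace Finsupp

variable {σ : Type*}

theorem weight_neg (w : σ → ℤ) (α : σ →₀ ℕ) : weight (-w) α = -weight w α := by
  simp [weight_apply, Finsupp.sum]

theorem eq_zero_of_weight_eq_zero_of_forall_pos {w : σ → ℤ} {α : σ →₀ ℕ}
    (h : weight w α = 0) (hw : ∀ s ∈ α.support, 0 < w s) : α = 0 := by
  by_contra hα
  have : 0 < weight w α := by
    rw [weight_apply, Finsupp.sum]
    exact Finset.sum_pos (fun s hs => smul_pos (Nat.pos_of_ne_zero (mem_support_iff.mp hs))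
      (hw s hs)) (support_nonempty_iff.mpr hα)
  omega

end Finsupp

namespace Subring

variable {R : Type*} [CommRing R] {A : Subring R} {π : R →ₗ[A] A}

theorem comap_map_subtype_of_retraction (hπ : ∀ a : A, π a = a) (J : Ideal A) :
    (J.map A.subtype).comap A.subtype = J := by
  refine le_antisymm (fun a ha => ?_) Ideal.le_comap_map
  have key : ∀ x ∈ J.map A.subtype, ∀ r : R, π (r * x) ∈ J := by
    intro x hx
    refine Submodule.span_induction ?_ ?_ ?_ ?_ hx
    · rintro _ ⟨b, hb, rfl⟩ r
      rw [mul_comm, ← smul_eq_mul, show A.subtype b • r = b • r from rfl, map_smul]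
      exact J.mul_mem_right _ hb
    · simp
    · intro x y _ _ hx hy r
      rw [mul_add, map_add]
      exact J.add_mem (hx r) (hy r)
    · intro s x _ hx r
      rw [smul_eq_mul, ← mul_assoc]
      exact hx _
  simpa [hπ] using key _ ha 1

theorem isNoetherianRing_of_retraction [IsNoetherianRing R] (hπ : ∀ a : A, π a = a) :
    IsNoetherianRing A := by
  refine isNoetherian_mk (StrictMono.wellFoundedGT (f := Ideal.map A.subtype) fun I J hIJ => ?_)
  refine lt_of_le_of_ne (Ideal.map_mono hIJ.le) fun h => hIJ.ne ?_
  rw [← comap_map_subtype_of_retraction hπ I, h, comap_map_subtype_of_retraction hπ J]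

end Subring

namespace MvPolynomial

open Sum

section Balanced

variable (R : Type*) [CommRing R] (ι₁ ι₂ : Type*)

def balanceWeight : ι₁ ⊕ ι₂ → ℤ := Sum.elim 1 (-1)

/-- Polynomials in which every monomial has the same degree in the `inl` and in the `inr`
variables: the homogeneous coordinate ring of the Segre embedding. -/
def balancedSubring : Subring (MvPolynomial (ι₁ ⊕ ι₂) R) where
  carrier := {p | p.IsWeightedHomogeneous (balanceWeight ι₁ ι₂) 0}
  mul_mem' ha hb := by simpa using ha.mul hb
  one_mem' := isWeightedHomogeneous_one _ _
  add_mem' := IsWeightedHomogeneous.add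
  zero_mem' := isWeightedHomogeneous_zero _ _ _
  neg_mem' := IsWeightedHomogeneous.neg

noncomputable def balancedPart :
    MvPolynomial (ι₁ ⊕ ι₂) R →ₗ[balancedSubring R ι₁ ι₂] balancedSubring R ι₁ ι₂ where
  toFun p := ⟨weightedHomogeneousComponent (balanceWeight ι₁ ι₂) 0 p,
    weightedHomogeneousComponent_isWeightedHomogeneous _ _⟩
  map_add' p q := Subtype.ext (map_add _ p q)
  map_smul' a p := Subtype.ext (a.2.weightedHomogeneousComponent_mul_of_zero p 0)

variable {R ι₁ ι₂}

theorem balancedPart_coe (a : balancedSubring R ι₁ ι₂) : balancedPart R ι₁ ι₂ a = a :=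
  Subtype.ext a.2.weightedHomogeneousComponent_same

instance [IsNoetherianRing R] [Finite ι₁] [Finite ι₂] :
    IsNoetherianRing (balancedSubring R ι₁ ι₂) :=
  Subring.isNoetherianRing_of_retraction balancedPart_coe

theorem X_inl_mul_X_inr_mem_balancedSubring (i : ι₁) (j : ι₂) :
    X (inl i) * X (inr j) ∈ balancedSubring R ι₁ ι₂ := by
  change IsWeightedHomogeneous _ _ _
  simpa [balanceWeight] using (isWeightedHomogeneous_X R (balanceWeight ι₁ ι₂) (inl i)).mul
    (isWeightedHomogeneous_X R _ (inr j))

theorem exists_inl_ne_zero_and_exists_inr_ne_zero {α : ι₁ ⊕ ι₂ →₀ ℕ}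
    (hw : Finsupp.weight (balanceWeight ι₁ ι₂) α = 0) (hα : α ≠ 0) :
    (∃ i, α (inl i) ≠ 0) ∧ ∃ j, α (inr j) ≠ 0 := by
  constructor
  · by_contra! h
    refine hα (Finsupp.eq_zero_of_weight_eq_zero_of_forall_pos (w := -balanceWeight ι₁ ι₂)
      (by rw [Finsupp.weight_neg, hw, neg_zero]) ?_)
    rintro (i | j) hs
    · exact absurd (h i) (Finsupp.mem_support_iff.mp hs)
    · simp [balanceWeight]
  · by_contra! h
    refine hα (Finsupp.eq_zero_of_weight_eq_zero_of_forall_pos hw ?_)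
    rintro (i | j) hs
    · simp [balanceWeight]
    · exact absurd (h j) (Finsupp.mem_support_iff.mp hs)

theorem mem_span_X_inl_and_mem_span_X_inr {p : MvPolynomial (ι₁ ⊕ ι₂) R}
    (hp : p ∈ balancedSubring R ι₁ ι₂) (h₀ : constantCoeff p = 0) :
    p ∈ Ideal.span (X '' Set.range inl) ∧ p ∈ Ideal.span (X '' Set.range inr) := by
  simp only [mem_ideal_span_X_image, Set.exists_range_iff]
  have key : ∀ α ∈ p.support, (∃ i, α (inl i) ≠ 0) ∧ ∃ j, α (inr j) ≠ 0 := by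
    intro α hα
    refine exists_inl_ne_zero_and_exists_inr_ne_zero (hp (mem_support_iff.mp hα)) ?_
    rintro rfl
    exact mem_support_iff.mp hα (by rwa [← constantCoeff_eq])
  exact ⟨fun α hα => (key α hα).1, fun α hα => (key α hα).2⟩

theorem eval_eq_zero_of_mem_balancedSubring {p : MvPolynomial (ι₁ ⊕ ι₂) R}
    (hp : p ∈ balancedSubring R ι₁ ι₂) (h₀ : constantCoeff p = 0) {z : ι₁ ⊕ ι₂ → R}
    (hz : (∀ i, z (inl i) = 0) ∨ ∀ j, z (inr j) = 0) : eval z p = 0 := by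
  obtain ⟨hinl, hinr⟩ := mem_span_X_inl_and_mem_span_X_inr hp h₀
  rcases hz with hz | hz
  · refine (Ideal.span_le (I := RingHom.ker (eval z)).mpr ?_ hinl : _)
    rintro _ ⟨_, ⟨i, rfl⟩, rfl⟩
    simp [hz]
  · refine (Ideal.span_le (I := RingHom.ker (eval z)).mpr ?_ hinr : _)
    rintro _ ⟨_, ⟨j, rfl⟩, rfl⟩
    simp [hz]

end Balanced

section KillVars

variable {R σ : Type*} [CommRing R] [DecidableEq σ]

noncomputable def killVars (S : Finset σ) : MvPolynomial σ R →ₐ[R] MvPolynomial σ R :=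
  aeval fun s => if s ∈ S then 0 else X s

theorem killVars_killVars {S T : Finset σ} (h : S ⊆ T) (p : MvPolynomial σ R) :
    killVars T (killVars S p) = killVars T p := by
  rw [← AlgHom.comp_apply, killVars, killVars, comp_aeval]
  congr 2
  funext s
  by_cases hs : s ∈ S
  · simp [hs, h hs]
  · simp [hs]

theorem killVars_univ [Fintype σ] (p : MvPolynomial σ R) :
    killVars Finset.univ p = C (constantCoeff p) := by
  simp only [killVars, Finset.mem_univ, if_true]
  exact aeval_zero p

theorem killVars_X_mul_X_eq_zero_iff [IsDomain R] {S : Finset σ} {a b : σ} :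
    killVars S (X a * X b : MvPolynomial σ R) = 0 ↔ a ∈ S ∨ b ∈ S := by
  simp only [killVars, map_mul, aeval_X]
  split_ifs <;> simp_all [X_ne_zero]

end KillVars

section Chain

variable {R : Type*} [CommRing R] {ι₁ ι₂ : Type*} [DecidableEq ι₁] [DecidableEq ι₂]

variable (R) in
noncomputable def killVarsPrime (S : Finset (ι₁ ⊕ ι₂)) : Ideal (balancedSubring R ι₁ ι₂) :=
  RingHom.ker ((killVars S).toRingHom.comp (balancedSubring R ι₁ ι₂).subtype)

theorem mem_killVarsPrime_univ [Fintype ι₁] [Fintype ι₂] {a : balancedSubring R ι₁ ι₂} :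
    a ∈ killVarsPrime R Finset.univ ↔ constantCoeff (a : MvPolynomial (ι₁ ⊕ ι₂) R) = 0 := by
  change killVars _ _ = 0 ↔ _
  rw [killVars_univ, C_eq_zero]
  rfl

variable [IsDomain R]

instance (S : Finset (ι₁ ⊕ ι₂)) : (killVarsPrime R S).IsPrime := RingHom.ker_isPrime _

theorem killVarsPrime_lt {S T : Finset (ι₁ ⊕ ι₂)} (hST : S ⊆ T) {i : ι₁} {j : ι₂}
    (hi : inl i ∉ S) (hj : inr j ∉ S) (hT : inl i ∈ T ∨ inr j ∈ T) :
    killVarsPrime R S < killVarsPrime R T := by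
  refine SetLike.lt_iff_le_and_exists.mpr ⟨fun p hp => ?_,
    ⟨_, X_inl_mul_X_inr_mem_balancedSubring i j⟩, ?_, ?_⟩
  · have hp : killVars S (p : MvPolynomial (ι₁ ⊕ ι₂) R) = 0 := hp
    change killVars T (p : MvPolynomial (ι₁ ⊕ ι₂) R) = 0
    rw [← killVars_killVars hST, hp, map_zero]
  · exact killVars_X_mul_X_eq_zero_iff.mpr hT
  · exact fun h => (killVars_X_mul_X_eq_zero_iff.mp h).elim hi hj

theorem card_le_height_killVarsPrime {i₀ : ι₁} {j₀ : ι₂} (S : Finset (ι₁ ⊕ ι₂))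
    (hi₀ : inl i₀ ∉ S) (hj₀ : inr j₀ ∉ S) : (S.card : ℕ∞) ≤ (killVarsPrime R S).height := by
  induction S using Finset.induction_on with
  | empty => simp
  | insert v S hv ih =>
    rw [Finset.mem_insert, not_or] at hi₀ hj₀
    have hlt : killVarsPrime R S < killVarsPrime R (insert v S) := by
      rcases v with i | j
      · exact killVarsPrime_lt (Finset.subset_insert _ _) hv hj₀.2
          (.inl (Finset.mem_insert_self _ _))
      · exact killVarsPrime_lt (Finset.subset_insert _ _) hi₀.2 hv
          (.inr (Finset.mem_insert_self _ _))
    calc ((insert v S).card : ℕ∞) = S.card + 1 := by rw [Finset.card_insert_of_notMem hv]; simp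
      _ ≤ (killVarsPrime R S).height + 1 := by gcongr; exact ih hi₀.2 hj₀.2
      _ ≤ _ := Ideal.height_add_one_le_of_lt_of_isPrime hlt

theorem card_add_card_sub_one_le_height_killVarsPrime_univ [Fintype ι₁] [Fintype ι₂]
    [Nonempty ι₁] [Nonempty ι₂] :
    ((Fintype.card ι₁ + Fintype.card ι₂ - 1 : ℕ) : ℕ∞) ≤
      (killVarsPrime R (Finset.univ : Finset (ι₁ ⊕ ι₂))).height := by
  obtain ⟨i₀⟩ := ‹Nonempty ι₁›
  obtain ⟨j₀⟩ := ‹Nonempty ι₂›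
  set S : Finset (ι₁ ⊕ ι₂) := Finset.univ \ {inl i₀, inr j₀}
  have hS : S.card + 2 = Fintype.card ι₁ + Fintype.card ι₂ := by
    rw [Finset.card_sdiff_of_subset (Finset.subset_univ _), Finset.card_pair (by simp),
      Finset.card_univ, Fintype.card_sum]
    have := Fintype.card_pos (α := ι₁)
    have := Fintype.card_pos (α := ι₂)
    omega
  have hlt : killVarsPrime R S < killVarsPrime R Finset.univ :=
    killVarsPrime_lt (Finset.subset_univ S) (i := i₀) (j := j₀) (by simp [S]) (by simp [S])
      (.inl (Finset.mem_univ _))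
  calc ((Fintype.card ι₁ + Fintype.card ι₂ - 1 : ℕ) : ℕ∞) = S.card + 1 := by
        rw [← hS]; push_cast; rfl
    _ ≤ (killVarsPrime R S).height + 1 := by
        gcongr
        exact card_le_height_killVarsPrime (i₀ := i₀) (j₀ := j₀) S (by simp [S]) (by simp [S])
    _ ≤ _ := Ideal.height_add_one_le_of_lt_of_isPrime hlt

end Chain

section Nullstellensatz

variable {k : Type*} [Field k] [IsAlgClosed k] {ι₁ ι₂ ι : Type*} [Fintype ι₁] [Fintype ι₂]
  {f : ι → balancedSubring k ι₁ ι₂}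

theorem mem_radical_span_of_constantCoeff_eq_zero
    (hzero : ∀ z : ι₁ ⊕ ι₂ → k, (∀ l, eval z (f l : MvPolynomial (ι₁ ⊕ ι₂) k) = 0) →
      (∀ i, z (inl i) = 0) ∨ ∀ j, z (inr j) = 0)
    {a : balancedSubring k ι₁ ι₂} (ha : constantCoeff (a : MvPolynomial (ι₁ ⊕ ι₂) k) = 0) :
    a ∈ (Ideal.span (Set.range f)).radical := by
  have hmap : (a : MvPolynomial (ι₁ ⊕ ι₂) k) ∈ ((Ideal.span (Set.range f)).map
      (balancedSubring k ι₁ ι₂).subtype).radical := by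
    rw [← vanishingIdeal_zeroLocus_eq_radical (K := k), mem_vanishingIdeal_iff]
    intro z hz
    rw [mem_zeroLocus_iff] at hz
    refine eval_eq_zero_of_mem_balancedSubring a.2 ha (hzero z fun l => ?_)
    exact hz _ (Ideal.mem_map_of_mem _ (Ideal.subset_span ⟨l, rfl⟩))
  rwa [← Subring.comap_map_subtype_of_retraction balancedPart_coe (Ideal.span (Set.range f)),
    ← Ideal.comap_radical]

theorem killVarsPrime_univ_mem_minimalPrimes [DecidableEq ι₁] [DecidableEq ι₂]
    (hf₀ : ∀ l, constantCoeff (f l : MvPolynomial (ι₁ ⊕ ι₂) k) = 0)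
    (hzero : ∀ z : ι₁ ⊕ ι₂ → k, (∀ l, eval z (f l : MvPolynomial (ι₁ ⊕ ι₂) k) = 0) →
      (∀ i, z (inl i) = 0) ∨ ∀ j, z (inr j) = 0) :
    killVarsPrime k Finset.univ ∈ (Ideal.span (Set.range f)).minimalPrimes := by
  have hle : Ideal.span (Set.range f) ≤ killVarsPrime k Finset.univ := by
    rw [Ideal.span_le]
    rintro _ ⟨l, rfl⟩
    exact mem_killVarsPrime_univ.mpr (hf₀ l)
  have hradical : (Ideal.span (Set.range f)).radical = killVarsPrime k Finset.univ :=
    le_antisymm ((Ideal.radical_mono hle).trans (Ideal.IsPrime.radical inferInstance).le)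
      fun a ha => mem_radical_span_of_constantCoeff_eq_zero hzero (mem_killVarsPrime_univ.mp ha)
  rw [← Ideal.radical_minimalPrimes, hradical, Ideal.minimalPrimes_eq_subsingleton_self]
  rfl

theorem card_add_card_sub_one_le_card_of_commonZeros_subset_axes [Nonempty ι₁] [Nonempty ι₂]
    [Fintype ι] (hf₀ : ∀ l, constantCoeff (f l : MvPolynomial (ι₁ ⊕ ι₂) k) = 0)
    (hzero : ∀ z : ι₁ ⊕ ι₂ → k, (∀ l, eval z (f l : MvPolynomial (ι₁ ⊕ ι₂) k) = 0) →
      (∀ i, z (inl i) = 0) ∨ ∀ j, z (inr j) = 0) :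
    Fintype.card ι₁ + Fintype.card ι₂ - 1 ≤ Fintype.card ι := by
  classical
  have hmin := killVarsPrime_univ_mem_minimalPrimes hf₀ hzero
  rw [show Set.range f = ↑(Finset.univ.image f) by simp] at hmin
  have := (card_add_card_sub_one_le_height_killVarsPrime_univ (R := k)).trans
    ((Ideal.height_le_card_of_mem_minimalPrimes_span_finset hmin).trans
      (Nat.cast_le.mpr (Finset.card_image_le.trans (Finset.card_univ (α := ι)).le)))
  exact_mod_cast this

end Nullstellensatz

section Bilinear

variable {k V₁ V₂ ι₁ ι₂ : Type*} [Field k] [AddCommGroup V₁] [Module k V₁] [AddCommGroup V₂]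
  [Module k V₂] [Fintype ι₁] [Fintype ι₂]

noncomputable def ofBilinear (b₁ : Module.Basis ι₁ k V₁) (b₂ : Module.Basis ι₂ k V₂)
    (φ : V₁ →ₗ[k] V₂ →ₗ[k] k) : MvPolynomial (ι₁ ⊕ ι₂) k :=
  ∑ i, ∑ j, C (φ (b₁ i) (b₂ j)) * (X (inl i) * X (inr j))

variable (b₁ : Module.Basis ι₁ k V₁) (b₂ : Module.Basis ι₂ k V₂) (φ : V₁ →ₗ[k] V₂ →ₗ[k] k)

theorem ofBilinear_mem_balancedSubring : ofBilinear b₁ b₂ φ ∈ balancedSubring k ι₁ ι₂ :=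
  Subring.sum_mem _ fun i _ => Subring.sum_mem _ fun j _ =>
    Subring.mul_mem _ (isWeightedHomogeneous_C _ _) (X_inl_mul_X_inr_mem_balancedSubring i j)

theorem constantCoeff_ofBilinear : constantCoeff (ofBilinear b₁ b₂ φ) = 0 := by
  simp [ofBilinear]

theorem eval_ofBilinear (z : ι₁ ⊕ ι₂ → k) :
    eval z (ofBilinear b₁ b₂ φ) =
      φ (b₁.equivFun.symm (z ∘ inl)) (b₂.equivFun.symm (z ∘ inr)) := by
  simp only [ofBilinear, map_sum, map_mul, eval_C, eval_X, Module.Basis.equivFun_symm_apply,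
    Function.comp_apply, map_smul, LinearMap.coe_sum, LinearMap.coe_smul, Finset.sum_apply,
    Pi.smul_apply, smul_eq_mul, Finset.mul_sum]
  rw [Finset.sum_comm]
  exact Finset.sum_congr rfl fun _ _ => Finset.sum_congr rfl fun _ _ => by ring

end Bilinear

end MvPolynomial

/-- If `b : V1 → V2 → W` is a bilinear map of finite-dimensional complex
vector spaces, `V1` and `V2` are nonzero, and `b v w ≠ 0` whenever `v ≠ 0` and `w ≠ 0`,
then `dim W ≥ dim V1 + dim V2 - 1`. -/
theorem stmt_0 (V1 V2 W : Type*) [AddCommGroup V1] [Module ℂ V1]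
    [AddCommGroup V2] [Module ℂ V2] [AddCommGroup W] [Module ℂ W]
    [FiniteDimensional ℂ V1] [FiniteDimensional ℂ V2] [FiniteDimensional ℂ W]
    [Nontrivial V1] [Nontrivial V2]
    (b : V1 →ₗ[ℂ] V2 →ₗ[ℂ] W)
    (hb : ∀ (v : V1) (w : V2), v ≠ 0 → w ≠ 0 → b v w ≠ 0) :
    Module.finrank ℂ V1 + Module.finrank ℂ V2 - 1 ≤ Module.finrank ℂ W := by
  let b₁ := Module.finBasis ℂ V1
  let b₂ := Module.finBasis ℂ V2
  let bW := Module.finBasis ℂ W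
  have : NeZero (Module.finrank ℂ V1) := ⟨Module.finrank_pos.ne'⟩
  have : NeZero (Module.finrank ℂ V2) := ⟨Module.finrank_pos.ne'⟩
  have key := card_add_card_sub_one_le_card_of_commonZeros_subset_axes
    (f := fun l => ⟨ofBilinear b₁ b₂ (b.compr₂ (bW.coord l)), ofBilinear_mem_balancedSubring ..⟩)
    (fun l => constantCoeff_ofBilinear ..) fun z hz => ?_
  · simpa using key
  simp only [eval_ofBilinear, LinearMap.compr₂_apply] at hz
  by_contra! h
  obtain ⟨⟨i, hi⟩, ⟨j, hj⟩⟩ := h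
  refine hb _ _ ?_ ?_ (bW.forall_coord_eq_zero_iff.mp hz)
  · exact (LinearEquiv.map_ne_zero_iff _).mpr fun h => hi (congrFun h i)
  · exact (LinearEquiv.map_ne_zero_iff _).mpr fun h => hj (congrFun h j)
end

section
/- Let K be a field, let t be a nonzero element of K, let N be a natural number and let a : {1,...,N} -> N be natural numbers. Define S_i = sum over j with i < j <= N of (a_j + 1), for i = 0, 1, ..., N (so S_N = 0). Consider the (N+1) x (N+1) matrix M whose entry in row i and column c (with i, c ranging over 0, ..., N) is t^((N - 2c) * S_i), where the exponent is an integer (negative exponents denote inverses in K). Then det M = prod over pairs 0 <= i < j <= N of ( t^(S_i - S_j) - t^(-(S_i - S_j)) ). -/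
/-!
Pulling `x i ^ N` out of row `i` leaves the Vandermonde matrix in the `(x i)⁻²`, whose determinant
is `∏_{i<j} ((x j)⁻² - (x i)⁻²)`. Every index lies in exactly `N` of the pairs `{i, j}`, so the
row factors redistribute as one factor `x i * x j` per pair, turning it into `x i / x j - x j / x i`.
The theorem is the case `x i = t ^ S i`.
-/

open Finset

lemma Fin.prod_prod_Ioi_mul_eq_prod_pow {M : Type*} [CommMonoid M] {n : ℕ} (f : Fin (n + 1) → M) :
    ∏ i, ∏ j ∈ Ioi i, (f i * f j) = ∏ i, f i ^ n := by
  rw [prod_prod_Ioi_mul_eq_prod_prod_off_diag (fun j i => f i)]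
  refine prod_congr rfl fun i _ => ?_
  rw [Finset.prod_const, Finset.card_compl, Finset.card_singleton, Fintype.card_fin,
    Nat.add_sub_cancel]

theorem Matrix.det_zpow_sub_two_mul {K : Type*} [Field K] {n : ℕ} (x : Fin (n + 1) → K)
    (hx : ∀ i, x i ≠ 0) :
    (Matrix.of fun i c : Fin (n + 1) => x i ^ ((n : ℤ) - 2 * c)).det =
      ∏ i, ∏ j ∈ Ioi i, (x i / x j - x j / x i) := by
  have hcol : (Matrix.of fun i c : Fin (n + 1) => x i ^ ((n : ℤ) - 2 * c)) =
      Matrix.of fun i c => x i ^ n * vandermonde (fun i => (x i)⁻¹ ^ 2) i c := by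
    ext i c
    simp only [of_apply, vandermonde_apply]
    rw [zpow_sub₀ (hx i), ← pow_mul, inv_pow, div_eq_mul_inv]
    norm_cast
  have hpair : ∀ i j, x i * x j * ((x j)⁻¹ ^ 2 - (x i)⁻¹ ^ 2) = x i / x j - x j / x i := by
    intro i j
    field_simp [hx i, hx j]
  rw [hcol, det_mul_column, det_vandermonde, ← Fin.prod_prod_Ioi_mul_eq_prod_pow,
    ← prod_mul_distrib]
  simp_rw [← prod_mul_distrib, hpair]

theorem stmt_3_general (K : Type*) [Field K] (t : K) (ht : t ≠ 0) (N : ℕ)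
    (S : ℕ → ℕ) :
    (Matrix.of fun i c : Fin (N + 1) =>
        t ^ (((N : ℤ) - 2 * (c : ℤ)) * (S i : ℤ))).det =
      ∏ i : Fin (N + 1), ∏ j ∈ Finset.Ioi i,
        (t ^ ((S (i : ℕ) : ℤ) - (S (j : ℕ) : ℤ)) -
          t ^ (-((S (i : ℕ) : ℤ) - (S (j : ℕ) : ℤ)))) := by
  simp_rw [mul_comm _ (S _ : ℤ), zpow_mul, zpow_neg, zpow_sub₀ ht, inv_div]
  exact Matrix.det_zpow_sub_two_mul _ fun i => zpow_ne_zero _ ht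

/-- Vandermonde-type determinant identity.  Given a field `K`, a nonzero
`t : K`, natural numbers `a 1, …, a N`, and `S i = ∑_{i < j ≤ N} (a j + 1)`, the
determinant of the `(N+1) × (N+1)` matrix with entry `t ^ ((N - 2c) * S i)` in row `i`,
column `c` equals `∏_{0 ≤ i < j ≤ N} (t ^ (S i - S j) - t ^ (-(S i - S j)))`. -/
theorem stmt_3 (K : Type*) [Field K] (t : K) (ht : t ≠ 0) (N : ℕ) (a : ℕ → ℕ)
    (S : ℕ → ℕ) (hS : ∀ i, S i = ∑ j ∈ Finset.Ioc i N, (a j + 1)) :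
    (Matrix.of fun i c : Fin (N + 1) =>
        t ^ (((N : ℤ) - 2 * (c : ℤ)) * (S i : ℤ))).det =
      ∏ i : Fin (N + 1), ∏ j ∈ Finset.Ioi i,
        (t ^ ((S (i : ℕ) : ℤ) - (S (j : ℕ) : ℤ)) -
          t ^ (-((S (i : ℕ) : ℤ) - (S (j : ℕ) : ℤ)))) :=
  stmt_3_general K t ht N S
end

section
/- For a natural number a, let chi_a be the unique Laurent polynomial over Z in one variable t satisfying chi_a * (t - t^(-1)) * (t^2 - t^(-2)) * (t^3 - t^(-3)) = (t^(a+1) - t^(-(a+1))) * (t^(a+2) - t^(-(a+2))) * (t^(a+3) - t^(-(a+3))). Then the coefficient of t^0 in (1 - t^(-2)) * chi_a equals 1 if 4 divides a, and equals 0 otherwise. -/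
/-!
Put `g = (1 - t⁻²) χ_a`. Since `(t - t⁻¹)(t² - t⁻²)(t³ - t⁻³) = (1 - t⁻²) t⁻⁴ (1 - t⁴)(1 - t⁶)`,
the product `g (1 - t⁴)(1 - t⁶)` is `t⁴` times the expanded numerator. Multiplying it by a long
enough truncation of `1 / ((1 - t⁴)(1 - t⁶)) = ∑ p(n) tⁿ` gives back `g` up to terms of high
degree, because the support of `g` is bounded below. So the constant term of `g` is
`p(a - 4) + p(a - 2) + p(a) - p(3a + 2)`, and the closed form of `p` does the rest.
-/

open LaurentPolynomial

/-- The number of `(i, j) ∈ ℕ²` with `4 i + 6 j = n`, i.e. the coefficient of `tⁿ` in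
`1 / ((1 - t⁴)(1 - t⁶))`. -/
def fourSixCount (n : ℤ) : ℤ :=
  if n < 0 ∨ n % 2 = 1 then 0 else n / 12 + if n % 12 = 2 then 0 else 1

lemma fourSixCount_of_neg {n : ℤ} (hn : n < 0) : fourSixCount n = 0 := by
  simp [fourSixCount, hn]

lemma fourSixCount_sub_sub_sub_add (n : ℤ) :
    fourSixCount n - fourSixCount (n - 4) - fourSixCount (n - 6) + fourSixCount (n - 10) =
      if n = 0 then 1 else 0 := by
  unfold fourSixCount; split_ifs <;> omega

lemma fourSixCount_cubic_combination (a : ℕ) :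
    fourSixCount (a - 4) + fourSixCount (a - 2) + fourSixCount a - fourSixCount (3 * a + 2) =
      if 4 ∣ a then 1 else 0 := by
  unfold fourSixCount; split_ifs <;> omega

section Semiring

variable {R : Type*} [Semiring R]

lemma coeff_mul_T (f : R[T;T⁻¹]) (m n : ℤ) : (f * T m).coeff n = f.coeff (n - m) := by
  rw [T, AddMonoidAlgebra.coeff_mul_single_apply, mul_one, sub_eq_add_neg]

lemma coeff_T_mul (f : R[T;T⁻¹]) (m n : ℤ) : (T m * f).coeff n = f.coeff (n - m) := by
  rw [T_mul, coeff_mul_T]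

end Semiring

section CommRing

variable {R : Type*} [CommRing R]

lemma weyl_denominator_eq :
    ((T 1 - T (-1)) * (T 2 - T (-2)) * (T 3 - T (-3)) : R[T;T⁻¹]) =
      (1 - T (-2)) * T (-4) * ((1 - T 4) * (1 - T 6)) := by
  simp only [sub_mul, mul_sub, one_mul, mul_one, ← T_add]
  norm_num
  ring

lemma weyl_numerator_mul_T_eq (a : ℤ) :
    ((T (a + 1) - T (-(a + 1))) * (T (a + 2) - T (-(a + 2))) * (T (a + 3) - T (-(a + 3))) *
      T 4 : R[T;T⁻¹]) =
      T (3 * a + 10) - T (a + 8) - T (a + 6) - T (a + 4) + T (4 - a) + T (2 - a) + T (-a) -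
        T (-3 * a - 2) := by
  simp only [sub_mul, mul_sub, ← T_add]
  ring_nf

end CommRing

noncomputable def fourSixCountTrunc (K : ℤ) : ℤ[T;T⁻¹] :=
  ∑ j ∈ Finset.Ico 0 K, C (fourSixCount j) * T j

lemma coeff_fourSixCountTrunc (K n : ℤ) :
    (fourSixCountTrunc K).coeff n = if n < K then fourSixCount n else 0 := by
  simp only [fourSixCountTrunc, AddMonoidAlgebra.coeff_sum, Finsupp.coe_finsetSum,
    Finset.sum_apply, ← single_eq_C_mul_T, AddMonoidAlgebra.coeff_single, Finsupp.single_apply,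
    Finset.sum_ite_eq', Finset.mem_Ico]
  split_ifs with hmem hlt hlt
  · rfl
  · exact absurd hmem.2 hlt
  · exact (fourSixCount_of_neg (by omega)).symm
  · rfl

lemma coeff_fourSixCountTrunc_of_lt {K n : ℤ} (hn : n < K) :
    (fourSixCountTrunc K).coeff n = fourSixCount n := by
  rw [coeff_fourSixCountTrunc, if_pos hn]

lemma coeff_fourSixCountTrunc_mul {K n : ℤ} (hn : n < K) :
    (fourSixCountTrunc K * ((1 - T 4) * (1 - T 6))).coeff n = if n = 0 then 1 else 0 := by
  have hexp : fourSixCountTrunc K * ((1 - T 4) * (1 - T 6)) =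
      fourSixCountTrunc K - fourSixCountTrunc K * T 4 - fourSixCountTrunc K * T 6 +
        fourSixCountTrunc K * T 10 := by
    rw [show (10 : ℤ) = 4 + 6 by norm_num, T_add]
    ring
  rw [hexp, AddMonoidAlgebra.coeff_add, AddMonoidAlgebra.coeff_sub, AddMonoidAlgebra.coeff_sub]
  simp only [Finsupp.coe_add, Finsupp.coe_sub, Pi.add_apply, Pi.sub_apply, coeff_mul_T]
  rw [coeff_fourSixCountTrunc_of_lt hn, coeff_fourSixCountTrunc_of_lt (by omega),
    coeff_fourSixCountTrunc_of_lt (by omega), coeff_fourSixCountTrunc_of_lt (by omega),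
    fourSixCount_sub_sub_sub_add]

lemma eventually_coeff_eq_coeff_mul_fourSixCountTrunc (g : ℤ[T;T⁻¹]) (n : ℤ) :
    ∀ᶠ K in Filter.atTop,
      g.coeff n = (g * ((1 - T 4) * (1 - T 6)) * fourSixCountTrunc K).coeff n := by
  classical
  obtain ⟨b, hb⟩ := g.coeff.support.bddBelow
  filter_upwards [Filter.eventually_gt_atTop (n - b)] with K hK
  set E := fourSixCountTrunc K * ((1 - T 4) * (1 - T 6)) - 1
  have hE : ∀ m ∈ E.coeff.support, K ≤ m := by
    intro m hm
    by_contra! hmK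
    refine Finsupp.mem_support_iff.mp hm ?_
    simp only [E, AddMonoidAlgebra.coeff_sub, Finsupp.coe_sub, Pi.sub_apply,
      coeff_fourSixCountTrunc_mul hmK]
    rw [← T_zero, T_apply, sub_eq_zero]
    exact if_congr eq_comm rfl rfl
  have hgE : (g * E).coeff n = 0 := by
    refine Finsupp.notMem_support_iff.mp fun hn => ?_
    obtain ⟨i, hi, j, hj, rfl⟩ :=
      Finset.mem_add.mp (AddMonoidAlgebra.support_coeff_mul_subset g E hn)
    have := hb hi
    have := hE j hj
    omega
  rw [show g * ((1 - T 4) * (1 - T 6)) * fourSixCountTrunc K = g + g * E by ring,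
    AddMonoidAlgebra.coeff_add, Finsupp.coe_add, Pi.add_apply, hgE, add_zero]

/-- if `χ_a` is the Laurent polynomial with
`χ_a · (t - t⁻¹)(t² - t⁻²)(t³ - t⁻³) = (t^{a+1} - t^{-(a+1)})(t^{a+2} - t^{-(a+2)})(t^{a+3} - t^{-(a+3)})`,
then the constant coefficient of `(1 - t⁻²) · χ_a` is `1` if `4 ∣ a` and `0` otherwise. -/
theorem stmt_5 (a : ℕ) (chi : LaurentPolynomial ℤ)
    (hchi : chi * ((T 1 - T (-1)) * (T 2 - T (-2)) * (T 3 - T (-3))) =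
      (T ((a : ℤ) + 1) - T (-((a : ℤ) + 1))) *
      (T ((a : ℤ) + 2) - T (-((a : ℤ) + 2))) *
      (T ((a : ℤ) + 3) - T (-((a : ℤ) + 3)))) :
    ((1 - T (-2)) * chi : LaurentPolynomial ℤ).coeff 0 = if 4 ∣ a then 1 else 0 := by
  have hT : (T (-4) * T 4 : ℤ[T;T⁻¹]) = 1 := by rw [← T_add, neg_add_cancel, T_zero]
  have hg : (1 - T (-2)) * chi * ((1 - T 4) * (1 - T 6)) =
      (T ((a : ℤ) + 1) - T (-((a : ℤ) + 1))) * (T ((a : ℤ) + 2) - T (-((a : ℤ) + 2))) *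
        (T ((a : ℤ) + 3) - T (-((a : ℤ) + 3))) * T 4 := by
    rw [← hchi, weyl_denominator_eq]
    linear_combination (-(1 - T (-2)) * chi * ((1 - T 4) * (1 - T 6))) * hT
  obtain ⟨K, hK, haK⟩ := ((eventually_coeff_eq_coeff_mul_fourSixCountTrunc _ 0).and
    (Filter.eventually_gt_atTop (3 * (a : ℤ) + 2))).exists
  rw [hK, hg, weyl_numerator_mul_T_eq]
  simp only [sub_mul, add_mul, AddMonoidAlgebra.coeff_add, AddMonoidAlgebra.coeff_sub,
    Finsupp.coe_add, Finsupp.coe_sub, Pi.add_apply, Pi.sub_apply, coeff_T_mul]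
  simp (disch := omega) only [coeff_fourSixCountTrunc_of_lt, fourSixCount_of_neg]
  convert fourSixCount_cubic_combination a using 3 <;> ring_nf
end

section
/- For a natural number b, let chi_b be the unique Laurent polynomial over Z in one variable t satisfying chi_b * (t - t^(-1)) * (t^2 - t^(-2))^2 * (t^3 - t^(-3)) = (t^(b+1) - t^(-(b+1))) * (t^(b+2) - t^(-(b+2)))^2 * (t^(b+3) - t^(-(b+3))). Then the coefficient of t^0 in (1 - t^(-2)) * chi_b equals floor(b/3) + 1. -/
/-!
Put `X = t⁻¹`. Since `t^k - t^{-k} = t^k (1 - X^{2k})`, the defining identity says that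
`(1 - t⁻²) χ_b` is `t^{4b}` times `N_b / D`, where `N_b = (1 - X^{2b+2}) (1 - X^{2b+4})² (1 - X^{2b+6})`
and `D = (1 - X⁴)² (1 - X⁶)`; so its constant coefficient is the coefficient `c_b` of `X^{4b}` in the
power series `N_b / D`. Modulo `X^{4b+16}` we have
`N_{b+3} - X¹² N_b = (1 - X¹²) - X^{2b+8} (1 + X²)² (1 - X⁶)`, so `c_{b+3} - c_b` is the coefficient
of `X^{4b+12}` in `(1 + X⁶) / (1 - X⁴)² - X^{2b+8} / (1 - X²)²`, namely `(b + 4) - (b + 3) = 1`.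
For `b = 0, 1, 2` the quotient `N_b / D` is a polynomial with `c_b = 1`.
-/

open LaurentPolynomial
open scoped Polynomial

namespace PowerSeries

variable {R : Type*} [CommRing R]

noncomputable def invOneSubXPowSq (p : ℕ) : R⟦X⟧ :=
  mk fun n => if p ∣ n then ((n / p + 1 : ℕ) : R) else 0

theorem coeff_invOneSubXPowSq (p n : ℕ) :
    coeff n (invOneSubXPowSq p : R⟦X⟧) = if p ∣ n then ((n / p + 1 : ℕ) : R) else 0 :=
  coeff_mk _ _

theorem invOneSubXPowSq_mul (p : ℕ) (hp : p ≠ 0) :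
    invOneSubXPowSq p * (1 - X ^ p : R⟦X⟧) ^ 2 = 1 := by
  have h : invOneSubXPowSq p = expand p hp (mk fun n => ((1 + n).choose 1 : R)) := by
    ext n
    rw [coeff_invOneSubXPowSq, coeff_expand]
    split_ifs <;> simp [add_comm]
  simpa [h] using congrArg (expand p hp) (mk_add_choose_mul_one_sub_pow_eq_one R 1)

end PowerSeries

namespace LaurentPolynomial

open Polynomial

variable {R : Type*} [CommRing R]

theorem coeff_toLaurent_natCast (f : R[X]) (n : ℕ) : (toLaurent f).coeff n = f.coeff n :=
  Finsupp.mapDomain_apply Nat.castEmbedding.injective _ n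

theorem T_sub_T_neg (m : ℤ) : (T m - T (-m) : R[T;T⁻¹]) = T m * (1 - T (-(2 * m))) := by
  rw [mul_sub, mul_one, ← T_add]
  ring_nf

/-- `invert ∘ toLaurent` substitutes `t⁻¹` for `X`. -/
theorem coeff_zero_eq_powerSeries_coeff {Z : R[T;T⁻¹]} {d m : R[X]} {S : PowerSeries R} {k : ℕ}
    (hd : IsUnit (d : PowerSeries R)) (hS : S * d = m)
    (hZ : Z * invert (toLaurent d) = T k * invert (toLaurent m)) :
    Z.coeff 0 = PowerSeries.coeff k S := by
  obtain ⟨n, f, hf⟩ := exists_T_pow (invert Z)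
  have hpoly : X ^ k * f * d = X ^ n * m := by
    apply toLaurent_injective
    have h := congrArg invert hZ
    simp only [map_mul, invert_T, involutive_invert _] at h
    simp only [map_mul, toLaurent_X_pow, hf]
    calc (T k : R[T;T⁻¹]) * (invert Z * T n) * toLaurent d
          = T n * T k * (invert Z * toLaurent d) := by ring
      _ = (T n * toLaurent m : R[T;T⁻¹]) := by
        rw [h, ← mul_assoc, mul_assoc (T n), ← T_add]
        simp
  have hser : PowerSeries.X ^ k * (f : PowerSeries R) = PowerSeries.X ^ n * S := by
    apply hd.mul_right_cancel
    rw [mul_assoc _ S, hS]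
    simpa using congrArg (fun p : R[X] => (p : PowerSeries R)) hpoly
  calc Z.coeff 0 = (invert Z * T n).coeff n := by
        rw [T, AddMonoidAlgebra.coeff_mul_single_apply]
        simp
    _ = PowerSeries.coeff (n + k) (PowerSeries.X ^ k * (f : PowerSeries R)) := by
      rw [← hf, coeff_toLaurent_natCast, PowerSeries.coeff_X_pow_mul, Polynomial.coeff_coe]
    _ = PowerSeries.coeff k S := by rw [hser, add_comm, PowerSeries.coeff_X_pow_mul]

end LaurentPolynomial

namespace SymCube

open Polynomial in
noncomputable def denom : ℤ[X] := (1 - X ^ 4) ^ 2 * (1 - X ^ 6)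

open Polynomial in
noncomputable def numer (b : ℕ) : ℤ[X] :=
  (1 - X ^ (2 * b + 2)) * (1 - X ^ (2 * b + 4)) ^ 2 * (1 - X ^ (2 * b + 6))

section Laurent

open Polynomial

theorem prod_T_sub_T_neg_eq (a : ℕ) :
    (T ((a : ℤ) + 1) - T (-((a : ℤ) + 1))) * (T ((a : ℤ) + 2) - T (-((a : ℤ) + 2))) ^ 2 *
      (T ((a : ℤ) + 3) - T (-((a : ℤ) + 3))) = T (4 * a + 8) * invert (toLaurent (numer a)) := by
  have hT : (T (4 * a + 8) : ℤ[T;T⁻¹]) = T (a + 1) * T (a + 2) ^ 2 * T (a + 3) := by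
    rw [T_pow, ← T_add, ← T_add]
    ring_nf
  have hnum : invert (toLaurent (numer a)) = (1 - T (-(2 * ((a : ℤ) + 1)))) *
      (1 - T (-(2 * ((a : ℤ) + 2)))) ^ 2 * (1 - T (-(2 * ((a : ℤ) + 3)))) := by
    simp only [numer, map_mul, map_sub, map_pow, map_one, toLaurent_X, invert_T, T_pow]
    push_cast
    ring_nf
  rw [hT, hnum, T_sub_T_neg, T_sub_T_neg, T_sub_T_neg]
  ring

theorem invert_toLaurent_numer_zero :
    invert (toLaurent (numer 0)) = (1 - T (-2)) * invert (toLaurent denom) := by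
  rw [show numer 0 = (1 - X ^ 2) * denom by simp [numer, denom]; ring]
  simp

end Laurent

open PowerSeries

theorem coe_denom : (denom : ℤ⟦X⟧) = (1 - X ^ 4) ^ 2 * (1 - X ^ 6) := by simp [denom]

theorem coe_numer (b : ℕ) : (numer b : ℤ⟦X⟧) =
    (1 - X ^ (2 * b + 2)) * (1 - X ^ (2 * b + 4)) ^ 2 * (1 - X ^ (2 * b + 6)) := by
  simp [numer]

theorem isUnit_denom : IsUnit (denom : ℤ⟦X⟧) := by
  simp [isUnit_iff_constantCoeff, coe_denom]

noncomputable def numerDivDenom (b : ℕ) : ℤ⟦X⟧ := numer b * ↑isUnit_denom.unit⁻¹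

theorem numerDivDenom_mul_denom (b : ℕ) : numerDivDenom b * denom = numer b := by
  simp [numerDivDenom, mul_assoc]

theorem coeff_numerDivDenom_of_lt_three {b : ℕ} (hb : b < 3) :
    coeff (4 * b) (numerDivDenom b) = 1 := by
  have hquot (P : ℤ⟦X⟧) (hP : (numer b : ℤ⟦X⟧) = P * denom) : numerDivDenom b = P :=
    isUnit_denom.mul_right_cancel ((numerDivDenom_mul_denom b).trans hP)
  simp only [coe_numer, coe_denom] at hquot
  interval_cases b
  · rw [hquot (1 - X ^ 2) (by ring)]
    simp
  · rw [hquot (1 + X ^ 4 - X ^ 6 - X ^ 10) (by ring)]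
    simp [coeff_X_pow]
  · rw [hquot (1 + 2 * X ^ 4 + X ^ 8 - X ^ 10 - 2 * X ^ 14 - X ^ 18) (by ring)]
    simp [coeff_X_pow, two_mul]

theorem coeff_numerDivDenom_add_three (b : ℕ) :
    coeff (4 * (b + 3)) (numerDivDenom (b + 3)) = coeff (4 * b) (numerDivDenom b) + 1 := by
  set φ := numerDivDenom (b + 3) - X ^ 12 * numerDivDenom b - (1 + X ^ 6) * invOneSubXPowSq 4 +
    X ^ (2 * b + 8) * invOneSubXPowSq 2
  have hφ : φ * (denom : ℤ⟦X⟧) = X ^ (4 * b + 16) *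
      (X ^ (2 * b + 6) * (1 + X ^ 2) ^ 2 * (1 - X ^ 6) - X ^ (4 * b + 12) * (1 - X ^ 12)) := by
    have hS := numerDivDenom_mul_denom b
    have hS' := numerDivDenom_mul_denom (b + 3)
    simp only [coe_numer, coe_denom] at hS hS' ⊢
    linear_combination hS' - X ^ 12 * hS -
      (1 + X ^ 6) * (1 - X ^ 6) * invOneSubXPowSq_mul (R := ℤ) 4 (by norm_num) +
      X ^ (2 * b + 8) * (1 + X ^ 2) ^ 2 * (1 - X ^ 6) * invOneSubXPowSq_mul (R := ℤ) 2 (by norm_num)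
  have hdvd : X ^ (4 * b + 16) ∣ φ := isUnit_denom.dvd_mul_right.mp (hφ ▸ dvd_mul_right _ _)
  have h0 : coeff (4 * b + 12) φ = 0 := X_pow_dvd_iff.mp hdvd _ (by omega)
  have hB : coeff (4 * b + 12) ((1 + X ^ 6) * invOneSubXPowSq 4 : ℤ⟦X⟧) = b + 4 := by
    simp only [add_mul, one_mul, map_add, coeff_X_pow_mul', coeff_invOneSubXPowSq]
    split_ifs <;> omega
  have hA : coeff (4 * b + 12) (X ^ (2 * b + 8) * invOneSubXPowSq 2 : ℤ⟦X⟧) = b + 3 := by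
    simp only [coeff_X_pow_mul', coeff_invOneSubXPowSq]
    split_ifs <;> omega
  have hS12 : coeff (4 * b + 12) (X ^ 12 * numerDivDenom b) = coeff (4 * b) (numerDivDenom b) :=
    coeff_X_pow_mul _ _ _
  simp only [φ, map_sub, map_add, hB, hA, hS12] at h0
  rw [show 4 * (b + 3) = 4 * b + 12 by ring]
  linarith

theorem coeff_numerDivDenom (b : ℕ) : coeff (4 * b) (numerDivDenom b) = (b / 3 : ℕ) + 1 := by
  induction b using Nat.strong_induction_on with
  | _ b ih =>
    rcases lt_or_ge b 3 with hb | hb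
    · rw [coeff_numerDivDenom_of_lt_three hb, Nat.div_eq_of_lt hb]
      simp
    · obtain ⟨a, rfl⟩ := Nat.exists_eq_add_of_le' hb
      rw [coeff_numerDivDenom_add_three, ih a (by omega)]
      push_cast
      omega

end SymCube

open SymCube Polynomial in
/-- if `χ_b` is the Laurent polynomial with
`χ_b · (t - t⁻¹)(t² - t⁻²)²(t³ - t⁻³) = (t^{b+1} - t^{-(b+1)})(t^{b+2} - t^{-(b+2)})²(t^{b+3} - t^{-(b+3)})`,
then the constant coefficient of `(1 - t⁻²) · χ_b` is `⌊b/3⌋ + 1`. -/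
theorem stmt_6 (b : ℕ) (chi : LaurentPolynomial ℤ)
    (hchi : chi * ((T 1 - T (-1)) * (T 2 - T (-2)) ^ 2 * (T 3 - T (-3))) =
      (T ((b : ℤ) + 1) - T (-((b : ℤ) + 1))) *
      (T ((b : ℤ) + 2) - T (-((b : ℤ) + 2))) ^ 2 *
      (T ((b : ℤ) + 3) - T (-((b : ℤ) + 3)))) :
    ((1 - T (-2)) * chi : LaurentPolynomial ℤ).coeff 0 = (b / 3 : ℕ) + 1 := by
  have hD := prod_T_sub_T_neg_eq 0
  simp only [Nat.cast_zero, zero_add, mul_zero, invert_toLaurent_numer_zero] at hD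
  have hY : (1 - T (-2)) * chi * invert (toLaurent denom) =
      T ((4 * b : ℕ) : ℤ) * invert (toLaurent (numer b)) := by
    apply (isUnit_T (8 : ℤ)).mul_left_cancel
    calc T 8 * ((1 - T (-2)) * chi * invert (toLaurent denom))
        = chi * (T 8 * ((1 - T (-2)) * invert (toLaurent denom))) := by ring
      _ = T 8 * (T ((4 * b : ℕ) : ℤ) * invert (toLaurent (numer b))) := by
        rw [← hD, hchi, prod_T_sub_T_neg_eq, add_comm, T_add]
        push_cast
        ring
  rw [coeff_zero_eq_powerSeries_coeff isUnit_denom (numerDivDenom_mul_denom b) hY,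
    coeff_numerDivDenom]
end

section
/- For all real numbers a >= 0 and b >= 0, the Lebesgue integral over the region P(a,b) = {(x, y) in R^2 : 0 <= x, 0 <= y, 2x + y <= 2a + b, x + 2y <= a + 2b} of the function x * y * (x + y) equals (a^5 + 10 a^4 b + 40 a^3 b^2 + 40 a^2 b^3 + 10 a b^4 + b^5) / 160. -/
/-!
By Fubini, slicing the quadrilateral by vertical lines, the fiber over `x ∈ [0, a + b/2]` is the
segment `[0, min (2a + b - 2x) ((a + 2b - x)/2)]`. Integrating `x y (x + y)` over it leaves a
piecewise polynomial in `x`, with a single break at `x = a` where the two slanted facets cross;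
integrating each polynomial piece gives the quintic.
-/

open MeasureTheory Set

theorem setIntegral_prod_fibered {α β E : Type*} [MeasurableSpace α] [MeasurableSpace β]
    [NormedAddCommGroup E] [NormedSpace ℝ E] {μ : Measure α} {ν : Measure β} [SFinite μ]
    [SFinite ν] {s : Set α} {t : α → Set β} {f : α × β → E} (hs : MeasurableSet s)
    (hst : MeasurableSet {p : α × β | p.1 ∈ s ∧ p.2 ∈ t p.1})
    (hf : IntegrableOn f {p : α × β | p.1 ∈ s ∧ p.2 ∈ t p.1} (μ.prod ν)) :
    ∫ p in {p : α × β | p.1 ∈ s ∧ p.2 ∈ t p.1}, f p ∂μ.prod ν =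
      ∫ x in s, ∫ y in t x, f (x, y) ∂ν ∂μ := by
  rw [← integral_indicator hst, integral_prod _ (hf.integrable_indicator hst),
    ← integral_indicator hs]
  congr 1 with x
  by_cases hx : x ∈ s
  · have ht : MeasurableSet (t x) := by
      simpa [hx] using measurable_prodMk_left hst (x := x)
    rw [indicator_of_mem hx, ← integral_indicator ht]
    congr 1 with y
    by_cases hy : y ∈ t x <;> simp [hx, hy]
  · simp [indicator, hx]

theorem integral_sum_mul_pow {n : ℕ} (C : Fin n → ℝ) (l u : ℝ) :
    ∫ x in l..u, ∑ i, C i * x ^ (i : ℕ) =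
      ∑ i, C i * (u ^ ((i : ℕ) + 1) - l ^ ((i : ℕ) + 1)) / ((i : ℕ) + 1) := by
  rw [intervalIntegral.integral_finsetSum fun (i : Fin n) _ =>
    ((continuous_pow (i : ℕ)).const_mul (C i)).intervalIntegrable l u]
  congr 1 with i
  rw [intervalIntegral.integral_const_mul, integral_pow, mul_div_assoc]

namespace CompleteConics

noncomputable def height (a b x : ℝ) : ℝ :=
  min (2 * a + b - 2 * x) ((a + 2 * b - x) / 2)

def polytope (a b : ℝ) : Set (ℝ × ℝ) :=
  {p | 0 ≤ p.1 ∧ 0 ≤ p.2 ∧ 2 * p.1 + p.2 ≤ 2 * a + b ∧ p.1 + 2 * p.2 ≤ a + 2 * b}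

theorem polytope_eq (a b : ℝ) :
    polytope a b = {p | p.1 ∈ Icc 0 (a + b / 2) ∧ p.2 ∈ Icc 0 (height a b p.1)} := by
  ext ⟨x, y⟩
  simp only [polytope, height, mem_ofPred_eq, mem_Icc, le_min_iff]
  constructor
  · rintro ⟨hx, hy, h₁, h₂⟩
    exact ⟨⟨hx, by linarith⟩, hy, by linarith, by linarith⟩
  · rintro ⟨⟨hx, -⟩, hy, h₁, h₂⟩
    exact ⟨hx, hy, by linarith, by linarith⟩

theorem isCompact_polytope (a b : ℝ) : IsCompact (polytope a b) := by
  refine Metric.isCompact_of_isClosed_isBounded ?_ ?_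
  · simp only [polytope, ofPred_and]
    refine (isClosed_le ?_ ?_).inter ((isClosed_le ?_ ?_).inter
      ((isClosed_le ?_ ?_).inter (isClosed_le ?_ ?_))) <;> fun_prop
  · refine Metric.isBounded_Icc ((0 : ℝ), (0 : ℝ)) (a + b / 2, a / 2 + b) |>.subset ?_
    rintro ⟨x, y⟩ ⟨hx, hy, h₁, h₂⟩
    exact ⟨⟨hx, hy⟩, by dsimp only; linarith, by dsimp only; linarith⟩

theorem setIntegral_fiber (x : ℝ) {c : ℝ} (hc : 0 ≤ c) :
    ∫ y in Icc 0 c, x * y * (x + y) = x ^ 2 * c ^ 2 / 2 + x * c ^ 3 / 3 := by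
  have h : ∀ y, x * y * (x + y) = ∑ i, ![0, x ^ 2, x] i * y ^ (i : ℕ) := by
    intro y
    simp only [Fin.sum_univ_succ, Fin.sum_univ_zero, Matrix.cons_val_zero,
      Matrix.cons_val_succ, Fin.val_zero, Fin.val_succ]
    ring
  rw [integral_Icc_eq_integral_Ioc, ← intervalIntegral.integral_of_le hc]
  simp only [h, integral_sum_mul_pow]
  simp only [Fin.sum_univ_succ, Fin.sum_univ_zero, Matrix.cons_val_zero,
    Matrix.cons_val_succ, Fin.val_zero, Fin.val_succ, Nat.cast_add, Nat.cast_one, Nat.cast_zero]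
  ring

theorem setIntegral_height {a b : ℝ} (ha : 0 ≤ a) (hb : 0 ≤ b) :
    ∫ x in Icc 0 (a + b / 2), (x ^ 2 * height a b x ^ 2 / 2 + x * height a b x ^ 3 / 3) =
      (a ^ 5 + 10 * a ^ 4 * b + 40 * a ^ 3 * b ^ 2 + 40 * a ^ 2 * b ^ 3 +
        10 * a * b ^ 4 + b ^ 5) / 160 := by
  set F := fun x => x ^ 2 * height a b x ^ 2 / 2 + x * height a b x ^ 3 / 3
  have hF : Continuous F := by unfold F height; fun_prop
  have haM : a ≤ a + b / 2 := by linarith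
  rw [integral_Icc_eq_integral_Ioc, ← intervalIntegral.integral_of_le (ha.trans haM),
    ← intervalIntegral.integral_add_adjacent_intervals (hF.intervalIntegrable 0 a)
      (hF.intervalIntegrable a _)]
  have h₁ : ∀ x ∈ uIcc 0 a, F x =
      ∑ i, ![0, (a + 2 * b) ^ 3 / 24, 0, -(a + 2 * b) / 8, 1 / 12] i * x ^ (i : ℕ) := by
    intro x hx
    rw [uIcc_of_le ha] at hx
    have hmin : (a + 2 * b - x) / 2 ≤ 2 * a + b - 2 * x := by linarith [hx.2]
    simp only [F, height, min_eq_right hmin, Fin.sum_univ_succ, Fin.sum_univ_zero,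
      Matrix.cons_val_zero, Matrix.cons_val_succ, Fin.val_zero, Fin.val_succ]
    ring
  have h₂ : ∀ x ∈ uIcc a (a + b / 2), F x =
      ∑ i, ![0, (2 * a + b) ^ 3 / 3, -3 * (2 * a + b) ^ 2 / 2, 2 * (2 * a + b), -2 / 3] i *
        x ^ (i : ℕ) := by
    intro x hx
    rw [uIcc_of_le haM] at hx
    have hmin : 2 * a + b - 2 * x ≤ (a + 2 * b - x) / 2 := by linarith [hx.1]
    simp only [F, height, min_eq_left hmin, Fin.sum_univ_succ, Fin.sum_univ_zero,
      Matrix.cons_val_zero, Matrix.cons_val_succ, Fin.val_zero, Fin.val_succ]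
    ring
  rw [intervalIntegral.integral_congr h₁, intervalIntegral.integral_congr h₂,
    integral_sum_mul_pow, integral_sum_mul_pow]
  simp only [Fin.sum_univ_succ, Fin.sum_univ_zero, Matrix.cons_val_zero,
    Matrix.cons_val_succ, Fin.val_zero, Fin.val_succ, Nat.cast_add, Nat.cast_one, Nat.cast_zero]
  ring

end CompleteConics

open CompleteConics in
/-- for `a, b ≥ 0`, the integral of `x y (x + y)` over the polytope
`{(x,y) : 0 ≤ x, 0 ≤ y, 2x + y ≤ 2a + b, x + 2y ≤ a + 2b}` equals
`(a⁵ + 10a⁴b + 40a³b² + 40a²b³ + 10ab⁴ + b⁵)/160`. -/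
theorem stmt_7 (a b : ℝ) (ha : 0 ≤ a) (hb : 0 ≤ b) :
    ∫ p in {p : ℝ × ℝ | 0 ≤ p.1 ∧ 0 ≤ p.2 ∧
      2 * p.1 + p.2 ≤ 2 * a + b ∧ p.1 + 2 * p.2 ≤ a + 2 * b},
        p.1 * p.2 * (p.1 + p.2) =
      (a ^ 5 + 10 * a ^ 4 * b + 40 * a ^ 3 * b ^ 2 + 40 * a ^ 2 * b ^ 3 +
        10 * a * b ^ 4 + b ^ 5) / 160 := by
  change ∫ p in polytope a b, p.1 * p.2 * (p.1 + p.2) ∂volume.prod volume = _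
  have hmeas := (isCompact_polytope a b).isClosed.measurableSet
  have hint : IntegrableOn (fun p : ℝ × ℝ => p.1 * p.2 * (p.1 + p.2)) (polytope a b)
      (volume.prod volume) :=
    (by fun_prop : Continuous _).continuousOn.integrableOn_compact (isCompact_polytope a b)
  rw [polytope_eq] at hmeas hint ⊢
  rw [setIntegral_prod_fibered (t := fun x => Icc 0 (height a b x)) measurableSet_Icc hmeas hint,
    ← setIntegral_height ha hb]
  refine setIntegral_congr_fun measurableSet_Icc fun x hx => setIntegral_fiber x ?_
  exact le_min (by linarith [hx.2]) (by linarith [hx.2])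
end

section
/- Let S be a finitely generated additive submonoid of Z^n, let lambda0 be an element of S, and let lambda be an element of S whose image in R^n lies in the topological interior of the smallest convex cone in R^n containing the image of S. Then there exists a positive integer h such that h * lambda - lambda0 belongs to S. -/
/-!
Since `lam` lies in the interior of the cone `C` and `C` is stable under nonnegative scaling,
`N • lam - lam0` lies in `C` for some `N > 0`. An integral point of the real cone spanned by
integral vectors is a nonnegative *rational* combination of them: by Carathéodory's theorem for
cones it is a nonnegative combination of linearly independent generators, and then its
coefficients are the unique solution of a rational linear system. Clearing denominators gives
`M • (N • lam - lam0) ∈ S` with `M > 0`, and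
`(M * N) • lam - lam0 = M • (N • lam - lam0) + (M - 1) • lam0`.
-/

/-- A `K`-linear functional vanishing on `W` but not at `x` extends coordinatewise to `L`. -/
theorem Submodule.mem_span_of_algebraMap_comp_mem_span {K L κ : Type*} [Field K] [Field L]
    [Algebra K L] [Fintype κ] {W : Set (κ → K)} {x : κ → K}
    (hx : algebraMap K L ∘ x ∈ span L ((algebraMap K L ∘ ·) '' W)) : x ∈ span K W := by
  classical
  by_contra hxW
  obtain ⟨f, hfx, hWf⟩ := exists_le_ker_of_notMem hxW
  let fL : (κ → L) →ₗ[L] L :=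
    Fintype.linearCombination L fun k => algebraMap K L (f fun j => if k = j then 1 else 0)
  have hfL (w : κ → K) : fL (algebraMap K L ∘ w) = algebraMap K L (f w) := by
    simp [fL, Fintype.linearCombination_apply, f.pi_apply_eq_sum_univ w]
  have hspan : span L ((algebraMap K L ∘ ·) '' W) ≤ LinearMap.ker fL := by
    rw [span_le]
    rintro _ ⟨w, hw, rfl⟩
    simpa [hfL] using hWf (subset_span hw)
  exact hfx (by simpa [hfL] using hspan hx)

section Caratheodory

variable {𝕜 E ι : Type*} [Field 𝕜] [LinearOrder 𝕜] [IsStrictOrderedRing 𝕜]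
  [AddCommGroup E] [Module 𝕜 E] {v : ι → E}

theorem exists_nonneg_sum_erase_eq_of_not_linearIndepOn [DecidableEq ι] {s : Finset ι}
    {c : ι → 𝕜} (hs : ¬LinearIndepOn 𝕜 v s) (hc : ∀ i ∈ s, 0 ≤ c i) :
    ∃ i ∈ s, ∃ d : ι → 𝕜, (∀ j ∈ s.erase i, 0 ≤ d j) ∧
      ∑ j ∈ s.erase i, d j • v j = ∑ j ∈ s, c j • v j := by
  obtain ⟨g, hg, hpos⟩ : ∃ g : ι → 𝕜, ∑ i ∈ s, g i • v i = 0 ∧ ∃ i ∈ s, 0 < g i := by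
    obtain ⟨g, hg, i, hi, hgi⟩ := not_linearIndepOn_finset_iff.mp hs
    rcases hgi.lt_or_gt with hneg | hpos
    · exact ⟨-g, by simp [neg_smul, Finset.sum_neg_distrib, hg], i, hi, by simpa using hneg⟩
    · exact ⟨g, hg, i, hi, hpos⟩
  obtain ⟨i₀, hi₀, hmin⟩ := Finset.exists_min_image {i ∈ s | 0 < g i} (fun i => c i / g i)
    (by obtain ⟨i, hi, hgi⟩ := hpos; exact ⟨i, Finset.mem_filter.mpr ⟨hi, hgi⟩⟩)
  obtain ⟨hi₀s, hgi₀⟩ := Finset.mem_filter.mp hi₀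
  set t := c i₀ / g i₀
  have ht : 0 ≤ t := div_nonneg (hc i₀ hi₀s) hgi₀.le
  refine ⟨i₀, hi₀s, fun j => c j - t * g j, fun j hj => ?_, ?_⟩
  · have hjs := Finset.mem_of_mem_erase hj
    rcases le_or_gt (g j) 0 with hgj | hgj
    · nlinarith [hc j hjs]
    · have := hmin j (Finset.mem_filter.mpr ⟨hjs, hgj⟩)
      rw [le_div_iff₀ hgj] at this
      linarith
  · rw [Finset.sum_erase _ (by simp [t, hgi₀.ne'])]
    simp only [sub_smul, mul_smul, Finset.sum_sub_distrib, ← Finset.smul_sum, hg, smul_zero,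
      sub_zero]

theorem exists_linearIndepOn_nonneg_sum_eq (s : Finset ι) {c : ι → 𝕜}
    (hc : ∀ i ∈ s, 0 ≤ c i) :
    ∃ t ⊆ s, LinearIndepOn 𝕜 v t ∧ ∃ d : ι → 𝕜, (∀ i ∈ t, 0 ≤ d i) ∧
      ∑ i ∈ t, d i • v i = ∑ i ∈ s, c i • v i := by
  classical
  induction s using Finset.strongInduction generalizing c with
  | H s ih =>
    by_cases hs : LinearIndepOn 𝕜 v s
    · exact ⟨s, subset_rfl, hs, c, hc, rfl⟩
    obtain ⟨i, hi, d, hd, hsum⟩ := exists_nonneg_sum_erase_eq_of_not_linearIndepOn hs hc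
    obtain ⟨t, hts, ht, e, he, hsum'⟩ := ih _ (Finset.erase_ssubset hi) hd
    exact ⟨t, hts.trans (s.erase_subset i), ht, e, he, hsum'.trans hsum⟩

end Caratheodory

theorem exists_rat_nonneg_sum_eq {𝕜 ι κ : Type*} [Field 𝕜] [LinearOrder 𝕜]
    [IsStrictOrderedRing 𝕜] [Fintype κ] (v : ι → κ → ℚ) (s : Finset ι) {x : κ → ℚ}
    {c : ι → 𝕜} (hc : ∀ i ∈ s, 0 ≤ c i)
    (hx : (fun k => (x k : 𝕜)) = ∑ i ∈ s, c i • fun k => (v i k : 𝕜)) :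
    ∃ q : ι → ℚ, (∀ i ∈ s, 0 ≤ q i) ∧ x = ∑ i ∈ s, q i • v i := by
  obtain ⟨t, hts, ht, d, hd, hsum⟩ :=
    exists_linearIndepOn_nonneg_sum_eq (v := fun i k => (v i k : 𝕜)) s hc
  have hxt : x ∈ Submodule.span ℚ (v '' t) := by
    refine Submodule.mem_span_of_algebraMap_comp_mem_span (L := 𝕜) ?_
    have : algebraMap ℚ 𝕜 ∘ x = ∑ i ∈ t, d i • (algebraMap ℚ 𝕜 ∘ v i) := by
      funext k
      simpa [Finset.sum_apply] using (congrFun (hsum.trans hx.symm) k).symm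
    rw [Set.image_image, this]
    exact Submodule.sum_mem _ fun i hi => Submodule.smul_mem _ (d i)
      (Submodule.subset_span (Set.mem_image_of_mem _ (Finset.mem_coe.mpr hi)))
  obtain ⟨l, hlt, hl⟩ := Finsupp.mem_span_image_iff_linearCombination ℚ |>.mp hxt
  rw [Finsupp.linearCombination_apply_of_mem_supported ℚ (s := t) hlt] at hl
  have hl0 : ∀ i ∉ t, l i = 0 := fun i hi => Finsupp.notMem_support_iff.mp fun h => hi (hlt h)
  have hld : ∀ i ∈ t, (l i : 𝕜) = d i := by
    have : ∑ i ∈ t, ((l i : 𝕜) - d i) • (fun k => (v i k : 𝕜)) = 0 := by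
      funext k
      have := congrFun (hsum.trans hx.symm) k
      simp only [← hl, Finset.sum_apply, Pi.smul_apply, smul_eq_mul, Rat.cast_sum,
        Rat.cast_mul] at this
      simp [sub_mul, Finset.sum_sub_distrib, this]
    intro i hi
    exact sub_eq_zero.mp (linearIndepOn_finset_iff.mp ht _ this i hi)
  refine ⟨l, fun i _ => ?_, ?_⟩
  · by_cases hi : i ∈ t
    · exact Rat.cast_nonneg.mp (hld i hi ▸ hd i hi)
    · exact (hl0 i hi).ge
  · rw [← hl]
    exact Finset.sum_subset hts fun i _ hi => by simp [hl0 i hi]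

theorem AddSubmonoid.exists_nsmul_mem_of_mem_hull {κ : Type*} (S : AddSubmonoid (κ → ℤ))
    {y : κ → ℚ} (hy : y ∈ PointedCone.hull ℚ ((fun (w : κ → ℤ) k => (w k : ℚ)) '' S)) :
    ∃ M : ℕ, 0 < M ∧ ∃ w ∈ S, (fun k => (w k : ℚ)) = M • y := by
  induction hy using Submodule.span_induction with
  | mem _ h =>
    obtain ⟨w, hw, rfl⟩ := h
    exact ⟨1, one_pos, w, hw, by simp⟩
  | zero => exact ⟨1, one_pos, 0, S.zero_mem, by ext; simp⟩
  | add y₁ y₂ _ _ h₁ h₂ =>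
    obtain ⟨M₁, hM₁, w₁, hw₁, e₁⟩ := h₁
    obtain ⟨M₂, hM₂, w₂, hw₂, e₂⟩ := h₂
    refine ⟨M₁ * M₂, Nat.mul_pos hM₁ hM₂, M₂ • w₁ + M₁ • w₂,
      S.add_mem (S.nsmul_mem hw₁ _) (S.nsmul_mem hw₂ _), ?_⟩
    funext k
    have h₁ := congrFun e₁ k
    have h₂ := congrFun e₂ k
    simp only [Pi.smul_apply, nsmul_eq_mul] at h₁ h₂
    simp only [nsmul_eq_mul, Pi.add_apply, Pi.mul_apply, Pi.natCast_apply, Int.cast_add,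
      Int.cast_mul, Int.cast_natCast, h₁, h₂, Pi.smul_apply, Nat.cast_mul]
    ring
  | smul a y _ h =>
    obtain ⟨M, hM, w, hw, e⟩ := h
    refine ⟨(a : ℚ).den * M, Nat.mul_pos (a : ℚ).den_pos hM, (a : ℚ).num.toNat • w,
      S.nsmul_mem hw _, ?_⟩
    funext k
    have h := congrFun e k
    have hnum : (((a : ℚ).num.toNat : ℤ) : ℚ) = (a : ℚ) * (a : ℚ).den := by
      rw [Int.toNat_of_nonneg (Rat.num_nonneg.mpr a.2), Rat.mul_den_eq_num]
    simp only [Pi.smul_apply, nsmul_eq_mul] at h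
    simp only [Pi.smul_apply, nsmul_eq_mul, Int.cast_mul, hnum, h, ← Nonneg.coe_smul, smul_eq_mul,
      Nat.cast_mul]
    ring

theorem exists_smul_sub_mem_of_mem_interior {E : Type*} [AddCommGroup E] [Module ℝ E]
    [TopologicalSpace E] [ContinuousSub E] [ContinuousSMul ℝ E] {C : Set E}
    (hC : ∀ r : ℝ, 0 ≤ r → ∀ x ∈ C, r • x ∈ C) {x : E} (hx : x ∈ interior C) (y : E) :
    ∃ N : ℕ, 0 < N ∧ (N : ℝ) • x - y ∈ C := by
  have hlim : Filter.Tendsto (fun N : ℕ => x - (N : ℝ)⁻¹ • y) Filter.atTop (nhds x) := by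
    simpa using tendsto_const_nhds.sub ((tendsto_inv_atTop_nhds_zero_nat (𝕜 := ℝ)).smul_const y)
  obtain ⟨N, hNC, hN⟩ :=
    ((hlim.eventually (isOpen_interior.mem_nhds hx)).and (Filter.eventually_gt_atTop 0)).exists
  refine ⟨N, hN, ?_⟩
  have := hC N N.cast_nonneg _ (interior_subset hNC)
  rwa [smul_sub, smul_smul, mul_inv_cancel₀ (by positivity), one_smul] at this

theorem AddSubmonoid.exists_nsmul_mem_of_cast_eq_sum {κ ι : Type*} [Fintype κ] [Fintype ι]
    {S : AddSubmonoid (κ → ℤ)} {z : κ → ℤ} {v : ι → κ → ℤ} (hv : ∀ i, v i ∈ S) {c : ι → ℝ}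
    (hc : ∀ i, 0 ≤ c i) (hz : (fun k => (z k : ℝ)) = ∑ i, c i • fun k => (v i k : ℝ)) :
    ∃ M : ℕ, 0 < M ∧ M • z ∈ S := by
  obtain ⟨q, hq, hzq⟩ := exists_rat_nonneg_sum_eq (fun i k => (v i k : ℚ)) Finset.univ
    (x := fun k => (z k : ℚ)) (fun i _ => hc i) (by simpa using hz)
  have hmem : (fun k => (z k : ℚ)) ∈
      PointedCone.hull ℚ ((fun (w : κ → ℤ) k => (w k : ℚ)) '' S) := by
    rw [hzq]
    exact Submodule.sum_mem _ fun i hi => (PointedCone.hull ℚ _).smul_mem (hq i hi)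
      (PointedCone.subset_hull ⟨v i, hv i, rfl⟩)
  obtain ⟨M, hM, w, hw, hwz⟩ := S.exists_nsmul_mem_of_mem_hull hmem
  refine ⟨M, hM, ?_⟩
  convert hw
  funext k
  have := congrFun hwz k
  simp only [Pi.smul_apply, nsmul_eq_mul] at this ⊢
  exact_mod_cast this.symm

theorem stmt_11_general (n : ℕ) (S : AddSubmonoid (Fin n → ℤ))
    (lam0 : Fin n → ℤ) (hlam0 : lam0 ∈ S) (lam : Fin n → ℤ)
    (C : Set (Fin n → ℝ))
    (hC : C = {x : Fin n → ℝ | ∃ (m : ℕ) (c : Fin m → ℝ) (v : Fin m → (Fin n → ℤ)),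
      (∀ i, 0 ≤ c i) ∧ (∀ i, v i ∈ S) ∧
        x = ∑ i, c i • (fun j => ((v i j : ℝ)))})
    (hint : (fun j => ((lam j : ℝ))) ∈ interior C) :
    ∃ h : ℕ, 0 < h ∧ h • lam - lam0 ∈ S := by
  have hcone : ∀ r : ℝ, 0 ≤ r → ∀ x ∈ C, r • x ∈ C := by
    subst hC
    rintro r hr _ ⟨m, c, v, hc, hv, rfl⟩
    exact ⟨m, r • c, v, fun i => mul_nonneg hr (hc i), hv, by simp [Finset.smul_sum, smul_smul]⟩
  obtain ⟨N, hN, hNC⟩ := exists_smul_sub_mem_of_mem_interior hcone hint fun j => (lam0 j : ℝ)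
  obtain ⟨m, c, v, hc, hv, hsum⟩ := hC ▸ hNC
  obtain ⟨M, hM, hMS⟩ := S.exists_nsmul_mem_of_cast_eq_sum (z := N • lam - lam0) hv hc
    (by rw [← hsum]; ext; simp)
  obtain ⟨M, rfl⟩ := Nat.exists_eq_add_one_of_ne_zero hM.ne'
  refine ⟨(M + 1) * N, by positivity, ?_⟩
  have hsplit : ((M + 1) * N) • lam - lam0 = (M + 1) • (N • lam - lam0) + M • lam0 := by
    simp only [smul_sub, mul_smul, add_smul, one_smul]
    abel
  rw [hsplit]
  exact S.add_mem hMS (S.nsmul_mem hlam0 M)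

/-- if `S` is a finitely generated additive submonoid of `ℤⁿ`,
`λ₀ ∈ S`, and `λ ∈ S` has image in `ℝⁿ` lying in the interior of the smallest convex
cone containing the image of `S` (the set of all finite nonnegative real combinations
of elements of `S`), then `h • λ - λ₀ ∈ S` for some positive integer `h`. -/
theorem stmt_11 (n : ℕ) (S : AddSubmonoid (Fin n → ℤ)) (hfg : S.FG)
    (lam0 : Fin n → ℤ) (hlam0 : lam0 ∈ S) (lam : Fin n → ℤ) (hlam : lam ∈ S)
    (C : Set (Fin n → ℝ))
    (hC : C = {x : Fin n → ℝ | ∃ (m : ℕ) (c : Fin m → ℝ) (v : Fin m → (Fin n → ℤ)),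
      (∀ i, 0 ≤ c i) ∧ (∀ i, v i ∈ S) ∧
        x = ∑ i, c i • (fun j => ((v i j : ℝ)))})
    (hint : (fun j => ((lam j : ℝ))) ∈ interior C) :
    ∃ h : ℕ, 0 < h ∧ h • lam - lam0 ∈ S :=
  stmt_11_general n S lam0 hlam0 lam C hC hint
end

section
/- Let k >= 2 and let n_1, ..., n_k and d_1, ..., d_k be natural numbers with n_i >= 1 and d_i >= 1 for all i. Assume that at least one of the following holds: the product d_1 * ... * d_k is at least 2, or k >= 3, or n_i >= 2 for all i. Then ((n_1 + ... + n_k)! / (n_1! * ... * n_k!)) * (d_1^(n_1) * ... * d_k^(n_k)) >= (max_i n_i) + 2. -/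
/-!
Let `M = nᵢ₀` be the largest `nᵢ` and `R = ∑_{i ≠ i₀} nᵢ ≥ k - 1 ≥ 1` the sum of the others.
Peeling off `i₀`, the multinomial coefficient is a multiple of `binom(M + R, M) ≥ M + R`.
If `R ≥ 2` this already gives `M + 2`. Otherwise `R = 1`, which forces `k = 2` and some
`nᵢ = 1`, so the hypothesis leaves `∏ dᵢ ≥ 2`, and the degree is at least `2 (M + 1)`.
-/

open Finset

namespace Nat

lemma add_le_add_choose {a b : ℕ} (ha : 1 ≤ a) (hb : 1 ≤ b) : a + b ≤ (a + b).choose a := by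
  induction b, hb using Nat.le_induction with
  | base => rw [choose_succ_self_right]
  | succ b hb ih =>
    obtain ⟨a, rfl⟩ := Nat.exists_eq_add_of_le' ha
    have hpos : 0 < (a + 1 + b).choose a := choose_pos (by omega)
    rw [show a + 1 + (b + 1) = a + 1 + b + 1 by ring, choose_succ_succ']
    omega

theorem sum_le_multinomial {α : Type*} [DecidableEq α] {s : Finset α} {f : α → ℕ} {i : α}
    (hi : i ∈ s) (hpos : 0 < f i) (hlt : f i < ∑ j ∈ s, f j) :
    ∑ j ∈ s, f j ≤ multinomial s f := by
  rw [← insert_erase hi, multinomial_insert (notMem_erase i s), sum_insert (notMem_erase i s)]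
  rw [← add_sum_erase s f hi] at hlt
  calc f i + ∑ j ∈ s.erase i, f j ≤ (f i + ∑ j ∈ s.erase i, f j).choose (f i) :=
        add_le_add_choose hpos (by omega)
    _ ≤ _ := Nat.le_mul_of_pos_right _ (multinomial_pos _ _)

end Nat

/-- for `k ≥ 2`, `nᵢ ≥ 1`, `dᵢ ≥ 1`, if `∏ dᵢ ≥ 2` or `k ≥ 3` or all
`nᵢ ≥ 2`, then the degree `multinomial(n₁,…,n_k) · ∏ dᵢ^{nᵢ}` of the
multi-Segre–Veronese embedding is at least `max nᵢ + 2`. -/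
theorem stmt_12 (k : ℕ) (hk : 2 ≤ k) (n d : Fin k → ℕ)
    (hn : ∀ i, 1 ≤ n i) (hd : ∀ i, 1 ≤ d i)
    (hcase : 2 ≤ ∏ i, d i ∨ 3 ≤ k ∨ ∀ i, 2 ≤ n i) :
    Finset.univ.sup n + 2 ≤
      Nat.multinomial Finset.univ n * ∏ i, d i ^ n i := by
  have : Nonempty (Fin k) := ⟨⟨0, by omega⟩⟩
  obtain ⟨i₀, -, hmax⟩ := exists_mem_eq_sup univ univ_nonempty n
  set R := ∑ i ∈ univ.erase i₀, n i
  have hsum : n i₀ + R = ∑ i, n i := add_sum_erase _ n (mem_univ i₀)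
  have hR : ∀ c, (∀ i, c ≤ n i) → (k - 1) * c ≤ R := fun c hc => by
    simpa [card_erase_of_mem] using card_nsmul_le_sum (univ.erase i₀) n c fun i _ => hc i
  have hR1 : k - 1 ≤ R := by simpa using hR 1 hn
  have hmult : n i₀ + R ≤ Nat.multinomial univ n := by
    rw [hsum]; exact Nat.sum_le_multinomial (mem_univ i₀) (hn i₀) (by omega)
  have hpow : ∏ i, d i ≤ ∏ i, d i ^ n i :=
    prod_le_prod' fun i _ => Nat.le_self_pow (Nat.one_le_iff_ne_zero.mp (hn i)) _
  have hprod : 1 ≤ ∏ i, d i := one_le_prod' fun i _ => hd i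
  rw [hmax]
  rcases le_or_gt 2 R with hR2 | hR2
  · calc n i₀ + 2 ≤ Nat.multinomial univ n := by omega
      _ ≤ _ := Nat.le_mul_of_pos_right _ (by omega)
  · have hd2 : 2 ≤ ∏ i, d i := by
      rcases hcase with h | h | h
      · exact h
      · omega
      · have := hR 2 h; omega
    calc n i₀ + 2 ≤ (n i₀ + R) * 2 := by omega
      _ ≤ _ := Nat.mul_le_mul hmult (hd2.trans hpow)
end
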